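/- arXiv:1808.10589 — 4 statements merged into one kernel-verified Lean document; each statement's English description precedes it below -/
import Mathlib

section
/- Let p,q ≥ 1 and let π ∈ S_ann-nc(p,q). Then every bridge of π is of the form (a₁,…,a_r,b₁,…,b_s) in cycle notation with a₁,…,a_r ∈ [p] and b₁,…,b_s ∈ [p+1,p+q]; consequently each bridge contains exactly one element a ∈ [p] with π(a) ∈ [p+1,p+q] and exactly one element b ∈ [p+1,p+q] with π(b) ∈ [p]. -/
/-!
The proof rests on the inequality `χ_τ(π) ≤ 2 #(Π(π) ∨ Π(τ))`, proved by induction on the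
support of `π`: replacing `π` by `(x π(x)) π` fixes `x` and raises `#(π)` by one, while `#(π⁻¹τ)`
drops by at most one, and the join gains a block only if `#(π⁻¹τ)` rises.

Suppose a cycle of `π`, noncrossing on `τ = τ_{p,q}`, leaves `[p]` at two points `c₁ ≠ c₂`.
Multiplying `π` and `τ` on the left by the transposition of `π c₁` and `π c₂` splits a cycle of
each and keeps `π⁻¹τ`, so `χ` rises by two. The join does not fall apart: the new `π` sends `c₁`
to `π c₂` and `c₂` to `π c₁`, and `c₁`, `c₂` stay linked through the untouched cycle `[p]` of `τ`.
This contradicts the inequality. An exit exists by walking along the cycle from `[p]` to `[p]ᶜ`.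
-/

namespace AnnNC

/-- The orbit ("same cycle") setoid of a permutation. -/
def orbitSetoid {α : Type*} (σ : Equiv.Perm α) : Setoid α :=
  ⟨σ.SameCycle, ⟨fun x => Equiv.Perm.SameCycle.refl σ x,
    fun h => h.symm, fun h h' => h.trans h'⟩⟩

/-- Number of orbits (cycles, counting fixed points) of a permutation. -/
noncomputable def numOrbits {α : Type*} (σ : Equiv.Perm α) : ℕ :=
  Nat.card (Quotient (orbitSetoid σ))

/-- Number of blocks of the join `Π(σ) ∨ Π(ρ)` of the orbit partitions. -/
noncomputable def numJoin {α : Type*} (σ ρ : Equiv.Perm α) : ℕ :=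
  Nat.card (Quotient (orbitSetoid σ ⊔ orbitSetoid ρ))

/-- Euler characteristic `χ_ρ(π) = #(ρ) + #(π) + #(π⁻¹ρ) − n`. -/
noncomputable def euler {α : Type*} (ρ π : Equiv.Perm α) : ℤ :=
  (numOrbits ρ : ℤ) + (numOrbits π : ℤ) + (numOrbits (π⁻¹ * ρ) : ℤ) - (Nat.card α : ℤ)

/-- `π` is noncrossing on `ρ`. -/
def IsNoncrossingOn {α : Type*} (π ρ : Equiv.Perm α) : Prop :=
  euler ρ π = 2 * (numJoin π ρ : ℤ)

/-- Euler characteristic of permutations regarded as permutations of a subset `S`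
(for permutations fixing the complement of `S` pointwise). -/
noncomputable def eulerOn {α : Type*} (S : Set α) (ρ π : Equiv.Perm α) : ℤ :=
  ((numOrbits ρ : ℤ) - (Nat.card (Sᶜ : Set α) : ℤ)) +
    ((numOrbits π : ℤ) - (Nat.card (Sᶜ : Set α) : ℤ)) +
    ((numOrbits (π⁻¹ * ρ) : ℤ) - (Nat.card (Sᶜ : Set α) : ℤ)) - (Nat.card (S : Set α) : ℤ)

/-- `π` is noncrossing on `ρ`, both regarded as permutations of the subset `S`. -/
def IsNoncrossingWithin {α : Type*} (S : Set α) (π ρ : Equiv.Perm α) : Prop :=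
  eulerOn S ρ π = 2 * ((numJoin π ρ : ℤ) - (Nat.card (Sᶜ : Set α) : ℤ))

/-- `τ_{p,q} = (1,…,p)(p+1,…,p+q)` as a permutation of `Fin (p+q)`. -/
def tauPQ (p q : ℕ) : Equiv.Perm (Fin (p + q)) :=
  Equiv.permCongr finSumFinEquiv (Equiv.sumCongr (finRotate p) (finRotate q))

/-- Disc-noncrossing permutations: noncrossing on `τ_{p,q}` and the orbit partition
refines that of `τ_{p,q}`. -/
def SDiscNC (p q : ℕ) : Set (Equiv.Perm (Fin (p + q))) :=
  {π | IsNoncrossingOn π (tauPQ p q) ∧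
    ∀ x y : Fin (p + q), π.SameCycle x y → ((x : ℕ) < p ↔ (y : ℕ) < p)}

/-- Annular-noncrossing permutations: noncrossing on `τ_{p,q}` with at least one bridge. -/
def SAnnNC (p q : ℕ) : Set (Equiv.Perm (Fin (p + q))) :=
  {π | IsNoncrossingOn π (tauPQ p q) ∧
    ∃ a b : Fin (p + q), π.SameCycle a b ∧ (a : ℕ) < p ∧ p ≤ (b : ℕ)}

/-- The set of elements lying in bridges of `σ`. -/
def BridgeSet (p q : ℕ) (σ : Equiv.Perm (Fin (p + q))) : Set (Fin (p + q)) :=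
  {x | ∃ a b : Fin (p + q), σ.SameCycle x a ∧ σ.SameCycle x b ∧ (a : ℕ) < p ∧ p ≤ (b : ℕ)}

/-- `π₀` is the permutation induced by `π` on the partition `Π(τ_{p,q})`
(the first–return map of `π` to each of the two sides). -/
def IsPiZero (p q : ℕ) (π π₀ : Equiv.Perm (Fin (p + q))) : Prop :=
  ∀ a : Fin (p + q), ∃ k : ℕ, 0 < k ∧ π₀ a = (π ^ k) a ∧
    (((a : ℕ) < p) ↔ (((π ^ k) a : ℕ) < p)) ∧
    ∀ j : ℕ, 0 < j → j < k → ¬ (((a : ℕ) < p) ↔ (((π ^ j) a : ℕ) < p))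

/-- The order `π ⪯ ρ` for (unhatted) permutations: the orbit partition of `π` refines
that of `ρ` and `π` is noncrossing on `ρ`. -/
def permLe {α : Type*} (π ρ : Equiv.Perm α) : Prop :=
  (∀ x y : α, π.SameCycle x y → ρ.SameCycle x y) ∧ IsNoncrossingOn π ρ

/-- The order relation `π ⪯ ρ̂` in `S_nc-sd(p,q)`, i.e. `Kr(ρ) ⪯ Kr(π)`. -/
def leAnnHat (p q : ℕ) (π ρ : Equiv.Perm (Fin (p + q))) : Prop :=
  permLe (ρ⁻¹ * tauPQ p q) (π⁻¹ * tauPQ p q)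

/-- `σ` is the permutation induced by `π` on the subset `J` (first-return map),
extended by the identity off `J`. -/
def IsInducedOn {α : Type*} (π σ : Equiv.Perm α) (J : Set α) : Prop :=
  (∀ a ∉ J, σ a = a) ∧
  ∀ a ∈ J, ∃ k : ℕ, 0 < k ∧ σ a = (π ^ k) a ∧ (π ^ k) a ∈ J ∧
    ∀ j : ℕ, 0 < j → j < k → (π ^ j) a ∉ J

/-- The size of an orbit of a permutation. -/
noncomputable def orbitSize {α : Type*} (σ : Equiv.Perm α) (c : Quotient (orbitSetoid σ)) : ℕ :=
  Nat.card {x : α // Quotient.mk (orbitSetoid σ) x = c}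

/-- `∏_{U ∈ Π(σ)} (−1)^{|U|−1} C_{|U|−1}`. -/
noncomputable def catProd {α : Type*} (σ : Equiv.Perm α) : ℤ :=
  ∏ᶠ c : Quotient (orbitSetoid σ),
    ((-1 : ℤ) ^ (orbitSize σ c - 1) * (catalan (orbitSize σ c - 1) : ℤ))

/-- The carrier of the poset `S_nc-sd(p,q)`: pairs (permutation, hatted?). -/
def NCSDSet (p q : ℕ) : Set (Equiv.Perm (Fin (p + q)) × Bool) :=
  {z | (z.2 = false ∧ (z.1 ∈ SDiscNC p q ∪ SAnnNC p q)) ∨ (z.2 = true ∧ z.1 ∈ SDiscNC p q)}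

/-- The partial order of `S_nc-sd(p,q)`. -/
def ncsdLe (p q : ℕ) (a b : Equiv.Perm (Fin (p + q)) × Bool) : Prop :=
  (a.2 = false ∧ b.2 = false ∧ permLe a.1 b.1) ∨
  (b.2 = true ∧ permLe (b.1⁻¹ * tauPQ p q) (a.1⁻¹ * tauPQ p q))

end AnnNC

namespace Equiv.Perm

variable {α : Type*}

theorem SameCycle.mem_of_mapsTo [Finite α] {f : Perm α} {S : Set α} (hS : Set.MapsTo f S S)
    {x y : α} (hx : x ∈ S) (h : f.SameCycle x y) : y ∈ S := by
  obtain ⟨k, -, rfl⟩ := h.exists_pow_eq'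
  rw [← iterate_eq_pow]
  exact hS.iterate k hx

theorem SameCycle.of_semiconj [Finite α] {β : Type*} {f : Perm α} {g : Perm β} {e : α → β}
    (he : Function.Semiconj e f g) {x y : α} (h : f.SameCycle x y) : g.SameCycle (e x) (e y) := by
  obtain ⟨k, -, rfl⟩ := h.exists_pow_eq'
  exact ⟨k, by rw [zpow_natCast, ← iterate_eq_pow, ← iterate_eq_pow, (he.iterate_right k).eq]⟩

theorem SameCycle.of_eqOn [Finite α] {f g : Perm α} {S : Set α} (hS : Set.MapsTo f S S)
    (hfg : Set.EqOn f g S) {x y : α} (hx : x ∈ S) (h : f.SameCycle x y) : g.SameCycle x y :=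
  (h.mem_of_mapsTo (S := {z | z ∈ S ∧ g.SameCycle x z})
    (fun _ hz => ⟨hS hz.1, hfg hz.1 ▸ hz.2.trans (sameCycle_apply_right.2 .rfl)⟩) ⟨hx, .rfl⟩).2

theorem exists_sameCycle_mem_apply_notMem [Finite α] {f : Perm α} {S : Set α} {a b : α}
    (h : f.SameCycle a b) (ha : a ∈ S) (hb : b ∉ S) :
    ∃ c, f.SameCycle a c ∧ c ∈ S ∧ f c ∉ S := by
  by_contra! hS
  exact hb (h.mem_of_mapsTo (S := {c | f.SameCycle a c ∧ c ∈ S})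
    (fun c hc => ⟨sameCycle_apply_right.2 hc.1, hS c hc.1 hc.2⟩) ⟨.rfl, ha⟩).2

variable [DecidableEq α] [Finite α] {f : Perm α} {u v : α}

theorem sameCycle_swap_mul_of_not_sameCycle (h : ¬ f.SameCycle u v) :
    (swap u v * f).SameCycle u v := by
  set g := swap u v * f
  have hgv : g (f.symm u) = v := by simp [g]
  by_contra h'
  have hT : Set.MapsTo f {y | f.SameCycle u y ∧ g.SameCycle u y}
      {y | f.SameCycle u y ∧ g.SameCycle u y} := by
    rintro y ⟨hfy, hgy⟩
    have hv : f y ≠ v := fun e => h (e ▸ sameCycle_apply_right.2 hfy)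
    have hu : f y ≠ u := fun e =>
      h' (hgv ▸ sameCycle_apply_right.2 (f.symm_apply_eq.2 e.symm ▸ hgy))
    have hgy' : g y = f y := swap_apply_of_ne_of_ne hu hv
    exact ⟨sameCycle_apply_right.2 hfy, hgy' ▸ sameCycle_apply_right.2 hgy⟩
  have hT' := (sameCycle_symm_apply_right.2 (SameCycle.refl f u)).mem_of_mapsTo hT ⟨.rfl, .rfl⟩
  exact h' (hgv ▸ sameCycle_apply_right.2 hT'.2)

/-- The walk from `u` along `f` stops just before its first visit to `v`; these points form a
`swap u v * f`-invariant set avoiding `v`. -/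
theorem not_sameCycle_swap_mul_of_sameCycle (huv : u ≠ v) (h : f.SameCycle u v) :
    ¬ (swap u v * f).SameCycle u v := by
  have hex : ∃ k, 0 < k ∧ (f ^ k) u = v := by
    obtain ⟨k, -, hk⟩ := h.exists_pow_eq'
    exact ⟨k, Nat.pos_of_ne_zero (by rintro rfl; exact huv hk), hk⟩
  set k := Nat.find hex
  have hk : 0 < k ∧ (f ^ k) u = v := Nat.find_spec hex
  have hmin : ∀ i, 0 < i → i < k → (f ^ i) u ≠ v := fun i hi hik e =>
    Nat.find_min hex hik ⟨hi, e⟩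
  have hret : ∀ i, 0 < i → i < k → (f ^ i) u ≠ u := fun i hi hik e =>
    hmin (k - i) (by omega) (by omega)
      (by rw [← e, ← mul_apply, ← pow_add, Nat.sub_add_cancel hik.le, hk.2])
  have hA : Set.MapsTo (swap u v * f) {y | ∃ i < k, (f ^ i) u = y}
      {y | ∃ i < k, (f ^ i) u = y} := by
    rintro _ ⟨i, hik, rfl⟩
    rw [mul_apply, ← mul_apply f, ← pow_succ']
    rcases (show i + 1 ≤ k from hik).eq_or_lt with he | hlt
    · exact ⟨0, hk.1, by rw [he, hk.2, swap_apply_right, pow_zero, one_apply]⟩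
    · exact ⟨i + 1, hlt,
        (swap_apply_of_ne_of_ne (hret _ i.succ_pos hlt) (hmin _ i.succ_pos hlt)).symm⟩
  intro h'
  obtain ⟨i, hik, hi⟩ := h'.mem_of_mapsTo hA ⟨0, hk.1, rfl⟩
  rcases Nat.eq_zero_or_pos i with rfl | hi0
  · exact huv hi
  · exact hmin i hi0 hik hi

end Equiv.Perm

namespace Setoid

variable {α : Type*} {r s : Setoid α}

theorem map_of_le_surjective (h : r ≤ s) : Function.Surjective (map_of_le h) := by
  rintro ⟨x⟩
  exact ⟨⟦x⟧, rfl⟩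

variable [Finite α]

theorem card_quotient_le_of_le (h : r ≤ s) : Nat.card (Quotient s) ≤ Nat.card (Quotient r) :=
  Nat.card_le_card_of_surjective _ (map_of_le_surjective h)

theorem card_quotient_lt_of_le (h : r ≤ s) {a b : α} (hs : s a b) (hr : ¬ r a b) :
    Nat.card (Quotient s) < Nat.card (Quotient r) := by
  refine (card_quotient_le_of_le h).lt_of_ne fun hcard => hr (Quotient.exact ?_)
  have hbij := (Nat.bijective_iff_surjective_and_card (map_of_le h)).2
    ⟨map_of_le_surjective h, hcard.symm⟩
  exact hbij.1 (Quotient.sound hs)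

end Setoid

namespace AnnNC

open Equiv Equiv.Perm

variable {α : Type*}

theorem orbitSetoid_le_of_forall {f : Perm α} {r : Setoid α} (h : ∀ x, r x (f x)) :
    orbitSetoid f ≤ r := by
  rintro x _ ⟨i, rfl⟩
  induction i using Int.induction_on with
  | zero => exact r.refl x
  | succ i ih => rw [add_comm, zpow_one_add, mul_apply]; exact r.trans ih (h _)
  | pred i ih =>
    rw [sub_eq_neg_add, zpow_add, zpow_neg_one, mul_apply]
    exact r.trans ih (r.symm (by simpa using h (f⁻¹ ((f ^ (-(i : ℤ))) x))))

theorem orbitSetoid_mul_le (f g : Perm α) :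
    orbitSetoid (f * g) ≤ orbitSetoid f ⊔ orbitSetoid g :=
  orbitSetoid_le_of_forall fun x =>
    (orbitSetoid f ⊔ orbitSetoid g).trans
      ((le_sup_right : orbitSetoid g ≤ _) (sameCycle_apply_right.2 (SameCycle.refl g x)))
      ((le_sup_left : orbitSetoid f ≤ _) (sameCycle_apply_right.2 (SameCycle.refl f (g x))))

theorem orbitSetoid_inv_mul_le (f g : Perm α) :
    orbitSetoid (f⁻¹ * g) ≤ orbitSetoid f ⊔ orbitSetoid g := by
  refine (orbitSetoid_mul_le _ _).trans (sup_le_sup_right (fun x y h => ?_) _)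
  exact sameCycle_inv.1 h

theorem orbitSetoid_swap_le [DecidableEq α] {r : Setoid α} {u v : α} (h : r u v) :
    orbitSetoid (swap u v) ≤ r :=
  orbitSetoid_le_of_forall fun x => by
    rcases eq_or_ne x u with rfl | hu
    · simpa using h
    rcases eq_or_ne x v with rfl | hv
    · simpa using r.symm h
    rw [swap_apply_of_ne_of_ne hu hv]

theorem numOrbits_one : numOrbits (1 : Perm α) = Nat.card α :=
  (Nat.card_congr (Equiv.ofBijective (Quotient.mk (orbitSetoid 1))
    ⟨fun _ _ h => sameCycle_one.1 (Quotient.exact h), Quotient.mk_surjective⟩)).symm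

theorem numJoin_one_left (τ : Perm α) : numJoin 1 τ = numOrbits τ := by
  rw [numJoin, numOrbits, sup_eq_right.2 fun x y h => sameCycle_one.1 h ▸ (orbitSetoid τ).refl x]

section OrbitCounts

variable [Finite α] [DecidableEq α]

/-- Gluing the class of `v` onto the class of `u` is constant on the classes of
`r ⊔ orbitSetoid (swap u v)` and misses at most the class of `v`. -/
theorem card_quotient_le_card_quotient_sup_swap_add_one (r : Setoid α) (u v : α) :
    Nat.card (Quotient r) ≤ Nat.card (Quotient (r ⊔ orbitSetoid (swap u v))) + 1 := by
  classical
  let g : α → Quotient r := fun x => if r x v then ⟦u⟧ else ⟦x⟧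
  have hr : r ≤ Setoid.ker g := fun x y h => by
    have hv : r x v ↔ r y v := ⟨r.trans (r.symm h), r.trans h⟩
    simp only [Setoid.ker_def, g, hv, Quotient.sound h]
  have hswap : orbitSetoid (swap u v) ≤ Setoid.ker g := orbitSetoid_le_of_forall fun x => by
    rcases eq_or_ne x u with rfl | hu
    · simp [Setoid.ker_def, g]
    rcases eq_or_ne x v with rfl | hv
    · simp [Setoid.ker_def, g]
    rw [swap_apply_of_ne_of_ne hu hv]
  have hrange : Set.univ ⊆ Set.range g ∪ {⟦v⟧} := by
    rintro ⟨x⟩ -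
    by_cases hx : r x v
    · exact Or.inr (Quotient.sound hx)
    · exact Or.inl ⟨x, if_neg hx⟩
  calc Nat.card (Quotient r) = (Set.univ : Set (Quotient r)).ncard := Set.ncard_univ _ |>.symm
    _ ≤ (Set.range g).ncard + 1 :=
      (Set.ncard_le_ncard hrange).trans ((Set.ncard_union_le _ _).trans (by simp))
    _ = Nat.card (Quotient (Setoid.ker g)) + 1 := by
      rw [Nat.card_congr (Setoid.quotientKerEquivRange g), Nat.card_coe_set_eq]
    _ ≤ _ := Nat.add_le_add_right (Setoid.card_quotient_le_of_le (sup_le hr hswap)) 1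

theorem numOrbits_lt_swap_mul {f : Perm α} {u v : α} (huv : u ≠ v) (h : f.SameCycle u v) :
    numOrbits f < numOrbits (swap u v * f) :=
  Setoid.card_quotient_lt_of_le
    ((orbitSetoid_mul_le _ _).trans (sup_le (orbitSetoid_swap_le h) le_rfl)) h
    (not_sameCycle_swap_mul_of_sameCycle huv h)

theorem numOrbits_le_swap_mul_add_one (f : Perm α) (u v : α) :
    numOrbits f ≤ numOrbits (swap u v * f) + 1 := by
  refine (card_quotient_le_card_quotient_sup_swap_add_one _ u v).trans
    (Nat.add_le_add_right (Setoid.card_quotient_le_of_le ?_) 1)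
  exact (orbitSetoid_mul_le _ _).trans_eq (sup_comm _ _)

theorem euler_sub_le_euler_swap_mul_sub (τ : Perm α) {π : Perm α} {x : α} (hx : π x ≠ x) :
    euler τ π - 2 * numJoin π τ ≤
      euler τ (swap x (π x) * π) - 2 * numJoin (swap x (π x) * π) τ := by
  set π₁ := swap x (π x) * π
  set y := π.symm x
  have hyx : y ≠ x := fun h => hx (by rw [← h, apply_symm_apply, h])
  have hσ : π₁⁻¹ * τ = swap y x * (π⁻¹ * τ) := by
    have hconj : swap y x * π⁻¹ = π⁻¹ * swap x (π x) := by
      rw [swap_mul_eq_mul_swap, inv_inv, apply_symm_apply]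
    rw [mul_inv_rev, swap_inv, ← mul_assoc, ← hconj, mul_assoc]
  have hπx : π.SameCycle x (π x) := sameCycle_apply_right.2 .rfl
  have hπ₁ : numOrbits π < numOrbits π₁ := numOrbits_lt_swap_mul hx.symm hπx
  have hσ₁ : numOrbits (π⁻¹ * τ) ≤ numOrbits (π₁⁻¹ * τ) + 1 :=
    hσ ▸ numOrbits_le_swap_mul_add_one _ _ _
  set J₁ := orbitSetoid π₁ ⊔ orbitSetoid τ
  have hπ₁π : orbitSetoid π₁ ≤ orbitSetoid π :=
    (orbitSetoid_mul_le _ _).trans (sup_le (orbitSetoid_swap_le hπx) le_rfl)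
  have hππ₁ : orbitSetoid π ≤ orbitSetoid (swap x (π x)) ⊔ orbitSetoid π₁ := by
    simpa [π₁] using orbitSetoid_mul_le (swap x (π x)) π₁
  have hJJ₁ : orbitSetoid π ⊔ orbitSetoid τ ≤ J₁ ⊔ orbitSetoid (swap x (π x)) :=
    sup_le (hππ₁.trans (sup_le le_sup_right (le_sup_left.trans le_sup_left)))
      (le_sup_right.trans le_sup_left)
  have hc : numJoin π τ ≤ numJoin π₁ τ := Setoid.card_quotient_le_of_le (sup_le_sup_right hπ₁π _)
  have hc₁ : numJoin π₁ τ ≤ numJoin π τ + 1 :=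
    (card_quotient_le_card_quotient_sup_swap_add_one J₁ x (π x)).trans
      (Nat.add_le_add_right (Setoid.card_quotient_le_of_le hJJ₁) 1)
  have hsplit : numJoin π τ < numJoin π₁ τ → numOrbits (π⁻¹ * τ) < numOrbits (π₁⁻¹ * τ) := by
    intro hlt
    have hJ₁ : ¬ J₁ x (π x) := fun h => hlt.not_ge
      (Setoid.card_quotient_le_of_le (hJJ₁.trans (sup_le le_rfl (orbitSetoid_swap_le h))))
    have hπ₁y : π₁.SameCycle y (π x) := by
      simpa [π₁, y] using (sameCycle_apply_right.2 .rfl : π₁.SameCycle y (π₁ y))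
    have hσ₁yx : ¬ (π₁⁻¹ * τ).SameCycle y x := fun h => hJ₁ <|
      J₁.trans (J₁.symm (orbitSetoid_inv_mul_le π₁ τ h))
        ((le_sup_left : orbitSetoid π₁ ≤ J₁) hπ₁y)
    have hσyx : (π⁻¹ * τ).SameCycle y x := by
      simpa [hσ] using sameCycle_swap_mul_of_not_sameCycle hσ₁yx
    exact hσ ▸ numOrbits_lt_swap_mul hyx hσyx
  simp only [euler]
  omega

end OrbitCounts

theorem euler_le_two_mul_numJoin [Fintype α] [DecidableEq α] (τ π : Perm α) :
    euler τ π ≤ 2 * numJoin π τ := by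
  by_cases hπ : π = 1
  · subst hπ
    simp [euler, numOrbits_one, numJoin_one_left]
    omega
  · obtain ⟨x, hx⟩ : ∃ x, π x ≠ x := by
      by_contra! h
      exact hπ (Equiv.ext h)
    have := euler_le_two_mul_numJoin τ (swap x (π x) * π)
    have := euler_sub_le_euler_swap_mul_sub τ hx
    omega
termination_by π.support.card
decreasing_by exact card_support_swap_mul hx

section Noncrossing

variable [Fintype α] [DecidableEq α] {π τ : Perm α}

theorem IsNoncrossingOn.not_rel_sup_swap_mul (hnc : IsNoncrossingOn π τ) {u v : α} (huv : u ≠ v)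
    (hπ : π.SameCycle u v) (hτ : τ.SameCycle u v) :
    ¬ (orbitSetoid (swap u v * π) ⊔ orbitSetoid (swap u v * τ)) u v := by
  intro h
  have hσ : (swap u v * π)⁻¹ * (swap u v * τ) = π⁻¹ * τ := by
    rw [mul_inv_rev, swap_inv, mul_assoc, swap_mul_self_mul]
  have hle : ∀ f : Perm α, orbitSetoid f ≤ orbitSetoid (swap u v) ⊔ orbitSetoid (swap u v * f) :=
    fun f => by simpa using orbitSetoid_mul_le (swap u v) (swap u v * f)
  have hP := orbitSetoid_swap_le h
  have hJ : numJoin (swap u v * π) (swap u v * τ) ≤ numJoin π τ :=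
    Setoid.card_quotient_le_of_le <| sup_le
      ((hle π).trans (sup_le hP le_sup_left)) ((hle τ).trans (sup_le hP le_sup_right))
  have hgenus := euler_le_two_mul_numJoin (swap u v * τ) (swap u v * π)
  have hπ' := numOrbits_lt_swap_mul huv hπ
  have hτ' := numOrbits_lt_swap_mul huv hτ
  rw [IsNoncrossingOn, euler] at hnc
  rw [euler, hσ] at hgenus
  omega

theorem IsNoncrossingOn.eq_of_apply_notMem (hnc : IsNoncrossingOn π τ) {S : Set α}
    (hτS : Set.MapsTo τ S S) (hS : ∀ y ∈ S, ∀ z ∈ S, τ.SameCycle y z)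
    (hSc : ∀ y ∉ S, ∀ z ∉ S, τ.SameCycle y z) {c₁ c₂ : α} (hc : π.SameCycle c₁ c₂)
    (hc₁ : c₁ ∈ S) (hc₂ : c₂ ∈ S) (hπc₁ : π c₁ ∉ S) (hπc₂ : π c₂ ∉ S) : c₁ = c₂ := by
  by_contra hne
  set π' := swap (π c₁) (π c₂) * π
  set τ' := swap (π c₁) (π c₂) * τ
  have hτ' : τ'.SameCycle c₁ c₂ := by
    refine (hS c₁ hc₁ c₂ hc₂).of_eqOn hτS (fun z hz => ?_) hc₁
    exact (swap_apply_of_ne_of_ne (ne_of_mem_of_not_mem (hτS hz) hπc₁)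
      (ne_of_mem_of_not_mem (hτS hz) hπc₂)).symm
  have hπ'₁ : π'.SameCycle c₁ (π c₂) := by
    simpa [π'] using (sameCycle_apply_right.2 .rfl : π'.SameCycle c₁ (π' c₁))
  have hπ'₂ : π'.SameCycle c₂ (π c₁) := by
    simpa [π'] using (sameCycle_apply_right.2 .rfl : π'.SameCycle c₂ (π' c₂))
  set J := orbitSetoid π' ⊔ orbitSetoid τ'
  refine hnc.not_rel_sup_swap_mul (π.injective.ne hne)
    (sameCycle_apply_left.2 (sameCycle_apply_right.2 hc)) (hSc _ hπc₁ _ hπc₂) ?_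
  exact J.trans (J.symm ((le_sup_left : orbitSetoid π' ≤ J) hπ'₂)) <|
    J.trans ((le_sup_right : orbitSetoid τ' ≤ J) hτ'.symm) ((le_sup_left : orbitSetoid π' ≤ J) hπ'₁)

theorem IsNoncrossingOn.existsUnique_sameCycle_mem_apply_notMem (hnc : IsNoncrossingOn π τ)
    {S : Set α} (hτS : Set.MapsTo τ S S) (hS : ∀ y ∈ S, ∀ z ∈ S, τ.SameCycle y z)
    (hSc : ∀ y ∉ S, ∀ z ∉ S, τ.SameCycle y z) {x a b : α} (hxa : π.SameCycle x a)
    (hxb : π.SameCycle x b) (ha : a ∈ S) (hb : b ∉ S) :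
    ∃! c, π.SameCycle x c ∧ c ∈ S ∧ π c ∉ S := by
  obtain ⟨c, hac, hc, hπc⟩ := exists_sameCycle_mem_apply_notMem (hxa.symm.trans hxb) ha hb
  refine ⟨c, ⟨hxa.trans hac, hc, hπc⟩, fun d ⟨hxd, hd, hπd⟩ => ?_⟩
  exact hnc.eq_of_apply_notMem hτS hS hSc (hxd.symm.trans (hxa.trans hac)) hd hc hπd hπc

end Noncrossing

section Tau

variable {p q : ℕ}

theorem sameCycle_finRotate {n : ℕ} (i j : Fin n) : (finRotate n).SameCycle i j := by
  have : NeZero n := ⟨by rintro rfl; exact i.elim0⟩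
  refine ⟨(j - i).val, ?_⟩
  rw [zpow_natCast, ← iterate_eq_pow, ← finCycle_eq_finRotate_iterate, finCycle_apply,
    add_sub_cancel]

theorem tauPQ_castAdd (i : Fin p) :
    tauPQ p q (Fin.castAdd q i) = Fin.castAdd q (finRotate p i) := by
  simp [tauPQ, Equiv.permCongr_apply]

theorem tauPQ_natAdd (j : Fin q) :
    tauPQ p q (Fin.natAdd p j) = Fin.natAdd p (finRotate q j) := by
  simp [tauPQ, Equiv.permCongr_apply]

theorem tauPQ_lt_iff (x : Fin (p + q)) : (tauPQ p q x : ℕ) < p ↔ (x : ℕ) < p := by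
  induction x using Fin.addCases with
  | left i => simp [tauPQ_castAdd]
  | right j => simp [tauPQ_natAdd]

theorem tauPQ_sameCycle_of_lt {x y : Fin (p + q)} (hx : (x : ℕ) < p) (hy : (y : ℕ) < p) :
    (tauPQ p q).SameCycle x y := by
  induction x using Fin.addCases with
  | right j => simp at hx
  | left i =>
    induction y using Fin.addCases with
    | right j => simp at hy
    | left j => exact (sameCycle_finRotate i j).of_semiconj fun k => (tauPQ_castAdd k).symm

theorem tauPQ_sameCycle_of_le {x y : Fin (p + q)} (hx : p ≤ (x : ℕ)) (hy : p ≤ (y : ℕ)) :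
    (tauPQ p q).SameCycle x y := by
  induction x using Fin.addCases with
  | left i => simp at hx; omega
  | right i =>
    induction y using Fin.addCases with
    | left j => simp at hy; omega
    | right j => exact (sameCycle_finRotate i j).of_semiconj fun k => (tauPQ_natAdd k).symm

end Tau

end AnnNC

open AnnNC in
theorem stmt0_general (p q : ℕ) (π : Equiv.Perm (Fin (p + q)))
    (hπ : π ∈ SAnnNC p q) (x : Fin (p + q)) (hx : x ∈ BridgeSet p q π) :
    (∃! a : Fin (p + q), π.SameCycle x a ∧ (a : ℕ) < p ∧ p ≤ ((π a : ℕ))) ∧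
    (∃! b : Fin (p + q), π.SameCycle x b ∧ p ≤ (b : ℕ) ∧ ((π b : ℕ)) < p) := by
  obtain ⟨a, b, hxa, hxb, ha, hb⟩ := hx
  have hL := hπ.1.existsUnique_sameCycle_mem_apply_notMem (S := {z | (z : ℕ) < p})
    (fun z hz => (tauPQ_lt_iff z).2 hz) (fun y hy z hz => tauPQ_sameCycle_of_lt hy hz)
    (fun y hy z hz => tauPQ_sameCycle_of_le (not_lt.1 hy) (not_lt.1 hz)) hxa hxb ha (not_lt.2 hb)
  have hR := hπ.1.existsUnique_sameCycle_mem_apply_notMem (S := {z | p ≤ (z : ℕ)})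
    (fun z hz => not_lt.1 fun h => not_lt.2 hz ((tauPQ_lt_iff z).1 h))
    (fun y hy z hz => tauPQ_sameCycle_of_le hy hz)
    (fun y hy z hz => tauPQ_sameCycle_of_lt (not_le.1 hy) (not_le.1 hz)) hxb hxa hb (not_le.2 ha)
  simp only [Set.mem_ofPred_eq, not_lt, not_le] at hL hR
  exact ⟨hL, hR⟩

open AnnNC in
/-- every bridge of an annular noncrossing permutation consists of a block of
elements of `[p]` followed by a block of elements of `[p+1,p+q]`; equivalently, it contains
exactly one element `a ∈ [p]` with `π(a) ∈ [p+1,p+q]` and exactly one element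
`b ∈ [p+1,p+q]` with `π(b) ∈ [p]`. -/
theorem stmt0 (p q : ℕ) (hp : 1 ≤ p) (hq : 1 ≤ q) (π : Equiv.Perm (Fin (p + q)))
    (hπ : π ∈ SAnnNC p q) (x : Fin (p + q)) (hx : x ∈ BridgeSet p q π) :
    (∃! a : Fin (p + q), π.SameCycle x a ∧ (a : ℕ) < p ∧ p ≤ ((π a : ℕ))) ∧
    (∃! b : Fin (p + q), π.SameCycle x b ∧ p ≤ (b : ℕ) ∧ ((π b : ℕ)) < p) :=
  stmt0_general p q π hπ x hx
end

section
/- The poset S_nc-sd(1,2) is not a lattice: the two elements of S_ann-nc(1,2) with underlying permutations (1,2)(3) and (1,3)(2) are each below both (1,2,3) and (1,3,2), which are distinct minimal upper bounds; hence the pair {(1,2)(3), (1,3)(2)} has no least upper bound in S_nc-sd(1,2). -/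
namespace AnnNC

open Equiv

theorem numJoin_eq_one_of_linked {α : Type*} [Nonempty α] {π ρ : Perm α}
    (h : ∀ x y, ∃ z w, π.SameCycle x z ∧ ρ.SameCycle z w ∧ π.SameCycle w y) :
    numJoin π ρ = 1 := by
  set s := orbitSetoid π ⊔ orbitSetoid ρ
  have hπ : ∀ {a b}, π.SameCycle a b → s a b := fun h => Setoid.le_def.mp le_sup_left h
  have hρ : ∀ {a b}, ρ.SameCycle a b → s a b := fun h => Setoid.le_def.mp le_sup_right h
  have hrel : ∀ x y, s x y := fun x y => by
    obtain ⟨z, w, hxz, hzw, hwy⟩ := h x y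
    exact s.trans' (s.trans' (hπ hxz) (hρ hzw)) (hπ hwy)
  have : Subsingleton (Quotient s) :=
    ⟨fun a b => Quotient.inductionOn₂ a b fun x y => Quotient.sound (hrel x y)⟩
  exact Nat.card_eq_one_iff_unique.mpr ⟨this, ⟨Quotient.mk s (Classical.arbitrary α)⟩⟩

section Counting

variable {α : Type*} [Fintype α] [DecidableEq α]

instance (σ : Perm α) : Fintype (Quotient (orbitSetoid σ)) :=
  @Quotient.fintype _ _ (orbitSetoid σ)
    (fun x y => inferInstanceAs (Decidable (σ.SameCycle x y)))

theorem numOrbits_eq_card (σ : Perm α) :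
    numOrbits σ = Fintype.card (Quotient (orbitSetoid σ)) :=
  Nat.card_eq_fintype_card

theorem isNoncrossingOn_iff_of_linked [Nonempty α] {π ρ : Perm α}
    (h : ∀ x y, ∃ z w, π.SameCycle x z ∧ ρ.SameCycle z w ∧ π.SameCycle w y) :
    IsNoncrossingOn π ρ ↔
      Fintype.card (Quotient (orbitSetoid ρ)) + Fintype.card (Quotient (orbitSetoid π)) +
        Fintype.card (Quotient (orbitSetoid (π⁻¹ * ρ))) = Fintype.card α + 2 := by
  rw [IsNoncrossingOn, euler, numJoin_eq_one_of_linked h, numOrbits_eq_card, numOrbits_eq_card,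
    numOrbits_eq_card, Nat.card_eq_fintype_card]
  omega

end Counting

theorem ncsdLe_unhatted_iff {p q : ℕ} (a : Perm (Fin (p + q)) × Bool) (ρ : Perm (Fin (p + q))) :
    ncsdLe p q a (ρ, false) ↔ a.2 = false ∧ permLe a.1 ρ := by
  simp [ncsdLe]

theorem permLe_unhatted_of_ncsdLe {p q : ℕ} {π : Perm (Fin (p + q))}
    {t : Perm (Fin (p + q)) × Bool} (h : ncsdLe p q (π, false) t) (ht : t.2 = false) :
    permLe π t.1 := by
  rcases h with ⟨-, -, h⟩ | ⟨h, -⟩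
  · exact h
  · simp [ht] at h

/-- The paper's `(1,2,3)`, with points shifted to `Fin 3 = {0,1,2}`: `0 ↦ 1 ↦ 2 ↦ 0`. -/
abbrev threeCycle : Perm (Fin (1 + 2)) := swap 0 1 * swap 1 2

theorem threeCycle_sameCycle (x y : Fin (1 + 2)) : threeCycle.SameCycle x y := by
  revert x y; decide

theorem permLe_threeCycle {π : Perm (Fin (1 + 2))} (h : IsNoncrossingOn π threeCycle) :
    permLe π threeCycle :=
  ⟨fun x y _ => threeCycle_sameCycle x y, h⟩

theorem permLe_threeCycle_inv {π : Perm (Fin (1 + 2))} (h : IsNoncrossingOn π threeCycle⁻¹) :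
    permLe π threeCycle⁻¹ :=
  ⟨fun x y _ => Perm.sameCycle_inv.mpr (threeCycle_sameCycle x y), h⟩

theorem swap_zero_one_mem_sAnnNC : swap (0 : Fin (1 + 2)) 1 ∈ SAnnNC 1 2 :=
  ⟨(isNoncrossingOn_iff_of_linked (by decide)).2 (by decide), 0, 1,
    by decide, by decide, by decide⟩

theorem swap_zero_two_mem_sAnnNC : swap (0 : Fin (1 + 2)) 2 ∈ SAnnNC 1 2 :=
  ⟨(isNoncrossingOn_iff_of_linked (by decide)).2 (by decide), 0, 2,
    by decide, by decide, by decide⟩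

theorem threeCycle_mem_sAnnNC : threeCycle ∈ SAnnNC 1 2 :=
  ⟨(isNoncrossingOn_iff_of_linked (by decide)).2 (by decide), 0, 1,
    by decide, by decide, by decide⟩

theorem threeCycle_inv_mem_sAnnNC : threeCycle⁻¹ ∈ SAnnNC 1 2 :=
  ⟨(isNoncrossingOn_iff_of_linked (by decide)).2 (by decide), 0, 1,
    by decide, by decide, by decide⟩

theorem swap_zero_one_le_threeCycle : ncsdLe 1 2 (swap 0 1, false) (threeCycle, false) :=
  (ncsdLe_unhatted_iff _ _).2
    ⟨rfl, permLe_threeCycle ((isNoncrossingOn_iff_of_linked (by decide)).2 (by decide))⟩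

theorem swap_zero_two_le_threeCycle : ncsdLe 1 2 (swap 0 2, false) (threeCycle, false) :=
  (ncsdLe_unhatted_iff _ _).2
    ⟨rfl, permLe_threeCycle ((isNoncrossingOn_iff_of_linked (by decide)).2 (by decide))⟩

theorem swap_zero_one_le_threeCycle_inv : ncsdLe 1 2 (swap 0 1, false) (threeCycle⁻¹, false) :=
  (ncsdLe_unhatted_iff _ _).2
    ⟨rfl, permLe_threeCycle_inv ((isNoncrossingOn_iff_of_linked (by decide)).2 (by decide))⟩

theorem swap_zero_two_le_threeCycle_inv : ncsdLe 1 2 (swap 0 2, false) (threeCycle⁻¹, false) :=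
  (ncsdLe_unhatted_iff _ _).2
    ⟨rfl, permLe_threeCycle_inv ((isNoncrossingOn_iff_of_linked (by decide)).2 (by decide))⟩

theorem not_isNoncrossingOn_threeCycle_inv_threeCycle :
    ¬ IsNoncrossingOn threeCycle⁻¹ threeCycle :=
  mt (isNoncrossingOn_iff_of_linked (by decide)).1 (by decide)

theorem not_isNoncrossingOn_threeCycle_threeCycle_inv :
    ¬ IsNoncrossingOn threeCycle threeCycle⁻¹ :=
  mt (isNoncrossingOn_iff_of_linked (by decide)).1 (by decide)

theorem eq_threeCycle_or_inv_of_sameCycle (σ : Perm (Fin (1 + 2))) (h₁ : σ.SameCycle 0 1)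
    (h₂ : σ.SameCycle 0 2) : σ = threeCycle ∨ σ = threeCycle⁻¹ := by
  revert σ; decide

theorem eq_of_permLe_of_threeCycle {σ γ : Perm (Fin (1 + 2))}
    (hσ : σ = threeCycle ∨ σ = threeCycle⁻¹) (hγ : γ = threeCycle ∨ γ = threeCycle⁻¹)
    (h : permLe σ γ) : σ = γ := by
  rcases hσ with rfl | rfl <;> rcases hγ with rfl | rfl
  · rfl
  · exact absurd h.2 not_isNoncrossingOn_threeCycle_threeCycle_inv
  · exact absurd h.2 not_isNoncrossingOn_threeCycle_inv_threeCycle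
  · rfl

theorem eq_of_upperBound_le_threeCycle {γ : Perm (Fin (1 + 2))}
    (hγ : γ = threeCycle ∨ γ = threeCycle⁻¹) (t : Perm (Fin (1 + 2)) × Bool)
    (h₁ : ncsdLe 1 2 (swap 0 1, false) t) (h₂ : ncsdLe 1 2 (swap 0 2, false) t)
    (hle : ncsdLe 1 2 t (γ, false)) : t = (γ, false) := by
  obtain ⟨ht, htγ⟩ := (ncsdLe_unhatted_iff t γ).1 hle
  have hσ := eq_threeCycle_or_inv_of_sameCycle t.1
    ((permLe_unhatted_of_ncsdLe h₁ ht).1 0 1 (by decide))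
    ((permLe_unhatted_of_ncsdLe h₂ ht).1 0 2 (by decide))
  exact Prod.ext (eq_of_permLe_of_threeCycle hσ hγ htγ) ht

end AnnNC

open AnnNC in
/-- `S_nc-sd(1,2)` is not a lattice.  The annular elements `(1,2)(3)` and
`(1,3)(2)` are each below the annular elements `(1,2,3)` and `(1,3,2)`, which are distinct
minimal upper bounds, and the pair has no least upper bound. -/
theorem stmt10 :
    (Equiv.swap (0 : Fin (1 + 2)) 1 ∈ SAnnNC 1 2) ∧
    (Equiv.swap (0 : Fin (1 + 2)) 2 ∈ SAnnNC 1 2) ∧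
    ((Equiv.swap (0 : Fin (1 + 2)) 1 * Equiv.swap (1 : Fin (1 + 2)) 2) ∈ SAnnNC 1 2) ∧
    ((Equiv.swap (0 : Fin (1 + 2)) 1 * Equiv.swap (1 : Fin (1 + 2)) 2)⁻¹ ∈ SAnnNC 1 2) ∧
    (Equiv.swap (0 : Fin (1 + 2)) 1 * Equiv.swap (1 : Fin (1 + 2)) 2) ≠
      (Equiv.swap (0 : Fin (1 + 2)) 1 * Equiv.swap (1 : Fin (1 + 2)) 2)⁻¹ ∧
    ncsdLe 1 2 (Equiv.swap 0 1, false)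
      (Equiv.swap (0 : Fin (1 + 2)) 1 * Equiv.swap 1 2, false) ∧
    ncsdLe 1 2 (Equiv.swap 0 1, false)
      ((Equiv.swap (0 : Fin (1 + 2)) 1 * Equiv.swap 1 2)⁻¹, false) ∧
    ncsdLe 1 2 (Equiv.swap 0 2, false)
      (Equiv.swap (0 : Fin (1 + 2)) 1 * Equiv.swap 1 2, false) ∧
    ncsdLe 1 2 (Equiv.swap 0 2, false)
      ((Equiv.swap (0 : Fin (1 + 2)) 1 * Equiv.swap 1 2)⁻¹, false) ∧
    (∀ t ∈ NCSDSet 1 2, ncsdLe 1 2 (Equiv.swap 0 1, false) t →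
        ncsdLe 1 2 (Equiv.swap 0 2, false) t →
        ncsdLe 1 2 t (Equiv.swap (0 : Fin (1 + 2)) 1 * Equiv.swap 1 2, false) →
        t = (Equiv.swap (0 : Fin (1 + 2)) 1 * Equiv.swap 1 2, false)) ∧
    (∀ t ∈ NCSDSet 1 2, ncsdLe 1 2 (Equiv.swap 0 1, false) t →
        ncsdLe 1 2 (Equiv.swap 0 2, false) t →
        ncsdLe 1 2 t ((Equiv.swap (0 : Fin (1 + 2)) 1 * Equiv.swap 1 2)⁻¹, false) →
        t = ((Equiv.swap (0 : Fin (1 + 2)) 1 * Equiv.swap 1 2)⁻¹, false)) ∧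
    ¬ ∃ s ∈ NCSDSet 1 2, ncsdLe 1 2 (Equiv.swap 0 1, false) s ∧
        ncsdLe 1 2 (Equiv.swap 0 2, false) s ∧
        ∀ t ∈ NCSDSet 1 2, ncsdLe 1 2 (Equiv.swap 0 1, false) t →
          ncsdLe 1 2 (Equiv.swap 0 2, false) t → ncsdLe 1 2 s t := by
  have hmin := eq_of_upperBound_le_threeCycle (Or.inl rfl)
  have hmin' := eq_of_upperBound_le_threeCycle (Or.inr rfl)
  refine ⟨swap_zero_one_mem_sAnnNC, swap_zero_two_mem_sAnnNC, threeCycle_mem_sAnnNC,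
    threeCycle_inv_mem_sAnnNC, by decide, swap_zero_one_le_threeCycle,
    swap_zero_one_le_threeCycle_inv, swap_zero_two_le_threeCycle, swap_zero_two_le_threeCycle_inv,
    fun t _ => hmin t, fun t _ => hmin' t, ?_⟩
  rintro ⟨s, -, h₁, h₂, hleast⟩
  have hs₁ := hmin s h₁ h₂ (hleast _ (Or.inl ⟨rfl, Or.inr threeCycle_mem_sAnnNC⟩)
    swap_zero_one_le_threeCycle swap_zero_two_le_threeCycle)
  have hs₂ := hmin' s h₁ h₂ (hleast _ (Or.inl ⟨rfl, Or.inr threeCycle_inv_mem_sAnnNC⟩)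
    swap_zero_one_le_threeCycle_inv swap_zero_two_le_threeCycle_inv)
  exact absurd (congrArg Prod.fst (hs₁.symm.trans hs₂)) (by decide)
end

section
/- Let τ be a permutation consisting of a single cycle on a finite set I with n ≥ 2 elements, and let π be a permutation of I noncrossing on τ such that no cycle of π contains both a and τ(a) for any a ∈ I. Then π has at least two fixed points. -/
/-!
Since `τ` is a single cycle, `#(τ) = 1` and the join `Π(π) ∨ Π(τ)` is a single block, so
noncrossing says `#(π) + #(π⁻¹τ) = n + 1`. The separation hypothesis makes `π⁻¹τ` fixed-point
free, whence `2 #(π⁻¹τ) ≤ n`; and every orbit of `π` that is not a fixed point has at least two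
elements, whence `2 #(π) ≤ n + |Fix π|`. Adding up gives `|Fix π| ≥ 2`.
-/

open Finset Equiv

theorem Setoid.card_quotient_eq_one {α : Type*} [Nonempty α] {s : Setoid α}
    (h : ∀ x y, s x y) : Nat.card (Quotient s) = 1 := by
  have : Subsingleton (Quotient s) :=
    ⟨fun x y => Quotient.inductionOn₂ x y fun a b => Quotient.sound (h a b)⟩
  have : Nonempty (Quotient s) := ⟨⟦Classical.arbitrary α⟧⟩
  exact Nat.card_unique

theorem Setoid.two_mul_card_quotient_le {α : Type*} [Finite α] (s : Setoid α)
    (F : Finset α) (hF : ∀ a ∉ F, ∃ b ≠ a, s a b) :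
    2 * Nat.card (Quotient s) ≤ Nat.card α + #F := by
  classical
  have := Fintype.ofFinite α
  have hfiber (c : Quotient s) :
      2 ≤ #{a | Quotient.mk s a = c} + #{a ∈ F | Quotient.mk s a = c} := by
    induction c using Quotient.inductionOn with | h a => ?_
    by_cases ha : a ∈ F
    · have h₁ : 0 < #{x | Quotient.mk s x = ⟦a⟧} := card_pos.mpr ⟨a, by simp⟩
      have h₂ : 0 < #{x ∈ F | Quotient.mk s x = ⟦a⟧} := card_pos.mpr ⟨a, by simp [ha]⟩
      omega
    · obtain ⟨b, hba, hab⟩ := hF a ha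
      have : 1 < #{x | Quotient.mk s x = ⟦a⟧} :=
        one_lt_card.mpr ⟨a, by simp, b, by simpa using Quotient.sound (s.symm hab), hba.symm⟩
      omega
  calc 2 * Nat.card (Quotient s) = ∑ _c : Quotient s, 2 := by
        simp [mul_comm, Nat.card_eq_fintype_card]
    _ ≤ ∑ c, (#{a | Quotient.mk s a = c} + #{a ∈ F | Quotient.mk s a = c}) :=
      sum_le_sum fun c _ => hfiber c
    _ = Nat.card α + #F := by
      rw [sum_add_distrib, ← card_eq_sum_card_fiberwise (fun _ _ => mem_univ _),
        ← card_eq_sum_card_fiberwise (fun _ _ => mem_univ _), card_univ,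
        Nat.card_eq_fintype_card]

namespace AnnNC

variable {α : Type*}

theorem numOrbits_eq_one_of_forall_sameCycle [Nonempty α] {τ : Perm α}
    (hτ : ∀ x y, τ.SameCycle x y) : numOrbits τ = 1 :=
  Setoid.card_quotient_eq_one hτ

theorem numJoin_eq_one_of_forall_sameCycle [Nonempty α] (π : Perm α) {τ : Perm α}
    (hτ : ∀ x y, τ.SameCycle x y) : numJoin π τ = 1 :=
  Setoid.card_quotient_eq_one fun x y =>
    (le_sup_right : orbitSetoid τ ≤ orbitSetoid π ⊔ orbitSetoid τ) (hτ x y)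

theorem two_mul_numOrbits_le [Fintype α] [DecidableEq α] (σ : Perm α) :
    2 * numOrbits σ ≤ Nat.card α + #{a | σ a = a} :=
  Setoid.two_mul_card_quotient_le (orbitSetoid σ) _ fun a ha =>
    ⟨σ a, by simpa using ha, ⟨1, rfl⟩⟩

theorem two_mul_numOrbits_le_of_apply_ne [Finite α] {σ : Perm α} (hσ : ∀ a, σ a ≠ a) :
    2 * numOrbits σ ≤ Nat.card α := by
  simpa [numOrbits] using Setoid.two_mul_card_quotient_le (orbitSetoid σ) ∅ fun a _ =>
    ⟨σ a, hσ a, ⟨1, rfl⟩⟩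

theorem IsNoncrossingOn.numOrbits_add_numOrbits_eq [Nonempty α] {π τ : Perm α}
    (hτ : ∀ x y, τ.SameCycle x y) (hnc : IsNoncrossingOn π τ) :
    numOrbits π + numOrbits (π⁻¹ * τ) = Nat.card α + 1 := by
  rw [IsNoncrossingOn, euler, numOrbits_eq_one_of_forall_sameCycle hτ,
    numJoin_eq_one_of_forall_sameCycle π hτ] at hnc
  omega

end AnnNC

open AnnNC in
/-- if `τ` is a single cycle on a finite set with at least two elements and
`π` is noncrossing on `τ` with no cycle of `π` containing both `a` and `τ(a)`, then `π` has
at least two fixed points. -/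
theorem stmt11 {α : Type*} (hcard : 2 ≤ Nat.card α) (τ π : Equiv.Perm α)
    (hτ : ∀ x y : α, τ.SameCycle x y)
    (hnc : IsNoncrossingOn π τ)
    (hsep : ∀ a : α, ¬ π.SameCycle a (τ a)) :
    ∃ a b : α, a ≠ b ∧ π a = a ∧ π b = b := by
  classical
  have : Finite α := Nat.finite_of_card_ne_zero (by omega)
  have := Fintype.ofFinite α
  have : Nonempty α := (Nat.card_pos_iff.mp (by omega)).1
  have hfree : ∀ a, (π⁻¹ * τ) a ≠ a := fun a h =>
    hsep a ⟨1, by simpa using (congrArg π h).symm⟩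
  have hsum := hnc.numOrbits_add_numOrbits_eq hτ
  have hπ := two_mul_numOrbits_le π
  have hπτ := two_mul_numOrbits_le_of_apply_ne hfree
  obtain ⟨a, ha, b, hb, hab⟩ := one_lt_card.mp (show 1 < #{a | π a = a} by omega)
  exact ⟨a, b, hab, (mem_filter.mp ha).2, (mem_filter.mp hb).2⟩
end

section
/- Let τ be a permutation of a finite set I with exactly two cycles, and let π be a permutation of I noncrossing on τ that has at least one cycle meeting both cycles of τ, has no fixed points, and has no cycle containing both a and τ(a) for any a ∈ I. Then there exist a and b lying in different cycles of τ such that π = (a,b)(τ(a),τ⁻¹(b))(τ²(a),τ⁻²(b))⋯(τ⁻¹(a),τ(b)); in particular, the two cycles of τ have equal length and every cycle of π is a transposition joining the two cycles of τ. -/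
/-!
Since `π` bridges the two cycles of `τ`, the join `Π(π) ∨ Π(τ)` has a single block, so being
noncrossing reads `#(π) + #(π⁻¹τ) = n`. Both `π` and its Kreweras complement `π⁻¹τ` are
fixed-point free (a fixed point `x` of `π⁻¹τ` has `π x = τ x`), so each has at most `n / 2`
cycles; hence both are involutions. Then `π τ π⁻¹ = τ⁻¹`, so `π` maps `τ ^ k a` to
`τ ^ (-k) (π a)`, and the bridge of `π` is a transposition `(a, π a)` across the two cycles.
-/

theorem mul_mul_inv_eq_inv_of_mul_self_eq_one {G : Type*} [Group G] {p t : G}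
    (hp : p * p = 1) (hpt : p⁻¹ * t * (p⁻¹ * t) = 1) : p * t * p⁻¹ = t⁻¹ := by
  rw [inv_eq_of_mul_eq_one_right hp] at hpt ⊢
  rw [← mul_eq_one_iff_eq_inv, ← hpt]
  group

namespace Equiv.Perm

variable {α : Type*}

theorem SameCycle.eq_or_eq_apply_of_mul_self_eq_one {σ : Perm α} (hσ : σ * σ = 1) {x y : α}
    (h : σ.SameCycle x y) : y = x ∨ y = σ x := by
  obtain ⟨k, rfl⟩ := h
  rcases k.even_or_odd with ⟨m, rfl⟩ | ⟨m, rfl⟩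
  · left; simp [← two_mul, zpow_mul, sq, hσ]
  · right; simp [zpow_add, zpow_mul, sq, hσ]

section Reflection

variable {π τ : Perm α} (hπτ : π * τ * π⁻¹ = τ⁻¹)
include hπτ

theorem apply_zpow_apply_of_conj_eq_inv (k : ℤ) (x : α) :
    π ((τ ^ k) x) = (τ ^ (-k)) (π x) := by
  rw [zpow_neg, ← inv_zpow, ← hπτ, conj_zpow]
  simp

theorem sameCycle_apply_apply_iff_of_conj_eq_inv {x y : α} :
    τ.SameCycle (π x) (π y) ↔ τ.SameCycle x y := by
  rw [← sameCycle_inv, ← hπτ, sameCycle_conj]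
  simp

end Reflection

end Equiv.Perm

namespace AnnNC

open Equiv Equiv.Perm

variable {α : Type*}

theorem orbitSetoid_mk_eq_iff {σ : Perm α} {x y : α} :
    Quotient.mk (orbitSetoid σ) x = Quotient.mk (orbitSetoid σ) y ↔ σ.SameCycle x y :=
  Quotient.eq

theorem numOrbits_eq_two {τ : Perm α} {c₁ c₂ : α} (hc : ¬ τ.SameCycle c₁ c₂)
    (hτ : ∀ x, τ.SameCycle x c₁ ∨ τ.SameCycle x c₂) : numOrbits τ = 2 := by
  rw [numOrbits, Nat.card_eq_two_iff]
  refine ⟨⟦c₁⟧, ⟦c₂⟧, fun h => hc (orbitSetoid_mk_eq_iff.mp h), ?_⟩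
  ext u
  induction u using Quotient.inductionOn with
  | h x => simpa [orbitSetoid_mk_eq_iff, sameCycle_comm] using hτ x

theorem numJoin_eq_one {π τ : Perm α} {c₁ c₂ : α}
    (hτ : ∀ x, τ.SameCycle x c₁ ∨ τ.SameCycle x c₂) {a b : α} (hπab : π.SameCycle a b)
    (hτab : ¬ τ.SameCycle a b) : numJoin π τ = 1 := by
  set J := orbitSetoid π ⊔ orbitSetoid τ
  have hπJ : ∀ {x y}, π.SameCycle x y → J x y := fun h =>
    le_sup_left (a := orbitSetoid π) (b := orbitSetoid τ) h
  have hτJ : ∀ {x y}, τ.SameCycle x y → J x y := fun h =>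
    le_sup_right (a := orbitSetoid π) (b := orbitSetoid τ) h
  have h₁₂ : J c₁ c₂ := by
    rcases hτ a with ha | ha <;> rcases hτ b with hb | hb
    · exact absurd (ha.trans hb.symm) hτab
    · exact J.trans' (hτJ ha.symm) (J.trans' (hπJ hπab) (hτJ hb))
    · exact J.trans' (hτJ hb.symm) (J.trans' (hπJ hπab.symm) (hτJ ha))
    · exact absurd (ha.trans hb.symm) hτab
  have hJ : ∀ x, J x c₁ := fun x =>
    (hτ x).elim hτJ fun h => J.trans' (hτJ h) (J.symm' h₁₂)
  rw [numJoin, Nat.card_eq_one_iff_unique]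
  exact ⟨⟨fun u v => Quotient.inductionOn₂ u v fun x y =>
    Quotient.sound (J.trans' (hJ x) (J.symm' (hJ y)))⟩, ⟨⟦c₁⟧⟩⟩

theorem IsNoncrossingOn.numOrbits_add_numOrbits_eq_card {π τ : Perm α}
    (h : IsNoncrossingOn π τ) (hτ : numOrbits τ = 2) (hJ : numJoin π τ = 1) :
    numOrbits π + numOrbits (π⁻¹ * τ) = Nat.card α := by
  rw [IsNoncrossingOn, euler, hτ, hJ] at h
  omega

theorem apply_apply_eq_self_of_orbitSize_eq_two {σ : Perm α} (hσ : ∀ x, σ x ≠ x) {x : α}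
    (h : orbitSize σ ⟦x⟧ = 2) : σ (σ x) = x := by
  have h₁ : σ.SameCycle (σ x) x := sameCycle_apply_left.mpr (.refl σ x)
  have h₂ : σ.SameCycle (σ (σ x)) x := sameCycle_apply_left.mpr h₁
  obtain ⟨_, -, hy⟩ :=
    (Nat.card_eq_two_iff' (⟨x, rfl⟩ : {y // Quotient.mk (orbitSetoid σ) y = ⟦x⟧})).mp h
  by_contra hne
  have e₁ := hy ⟨σ x, orbitSetoid_mk_eq_iff.mpr h₁⟩ fun e => hσ x (Subtype.ext_iff.mp e)
  have e₂ := hy ⟨σ (σ x), orbitSetoid_mk_eq_iff.mpr h₂⟩ fun e =>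
    hne (Subtype.ext_iff.mp e)
  exact hσ (σ x) (Subtype.ext_iff.mp (e₂.trans e₁.symm))

theorem two_mul_numOrbits_eq_sum {σ : Perm α} [Fintype (Quotient (orbitSetoid σ))] :
    2 * numOrbits σ = ∑ _c : Quotient (orbitSetoid σ), 2 := by
  simp [numOrbits, Nat.card_eq_fintype_card, mul_comm]

section Finite

variable [Finite α] {σ : Perm α}

theorem card_eq_sum_orbitSize [Fintype (Quotient (orbitSetoid σ))] :
    Nat.card α = ∑ c, orbitSize σ c :=
  (Nat.card_congr (sigmaFiberEquiv _)).symm.trans Nat.card_sigma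

theorem two_le_orbitSize (hσ : ∀ x, σ x ≠ x) (c : Quotient (orbitSetoid σ)) :
    2 ≤ orbitSize σ c := by
  induction c using Quotient.inductionOn with
  | h x =>
    have h₁ : σ.SameCycle (σ x) x := sameCycle_apply_left.mpr (.refl σ x)
    have : Nontrivial {y // Quotient.mk (orbitSetoid σ) y = ⟦x⟧} :=
      ⟨⟨x, rfl⟩, ⟨σ x, orbitSetoid_mk_eq_iff.mpr h₁⟩, fun e =>
        hσ x (Subtype.ext_iff.mp e).symm⟩
    exact Finite.one_lt_card_iff_nontrivial.mpr this

theorem two_mul_numOrbits_le_card (hσ : ∀ x, σ x ≠ x) : 2 * numOrbits σ ≤ Nat.card α := by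
  have := Fintype.ofFinite (Quotient (orbitSetoid σ))
  rw [card_eq_sum_orbitSize (σ := σ), two_mul_numOrbits_eq_sum]
  exact Finset.sum_le_sum fun c _ => two_le_orbitSize hσ c

theorem orbitSize_eq_two (hσ : ∀ x, σ x ≠ x) (h : 2 * numOrbits σ = Nat.card α)
    (c : Quotient (orbitSetoid σ)) : orbitSize σ c = 2 := by
  have := Fintype.ofFinite (Quotient (orbitSetoid σ))
  rw [card_eq_sum_orbitSize (σ := σ), two_mul_numOrbits_eq_sum,
    Finset.sum_eq_sum_iff_of_le fun c _ => two_le_orbitSize hσ c] at h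
  exact (h c (Finset.mem_univ c)).symm

theorem mul_self_eq_one_of_two_mul_numOrbits_eq_card (hσ : ∀ x, σ x ≠ x)
    (h : 2 * numOrbits σ = Nat.card α) : σ * σ = 1 :=
  Perm.ext fun _ => apply_apply_eq_self_of_orbitSize_eq_two hσ (orbitSize_eq_two hσ h _)

end Finite

end AnnNC

open AnnNC in
/-- if `τ` has exactly two cycles, and `π` is noncrossing on `τ`, has a cycle
meeting both cycles of `τ`, has no fixed points and no cycle containing both `a` and
`τ(a)`, then `π` is a "spoke diagram": there are `a`, `b` in different cycles of `τ` with
`π = (a,b)(τ(a),τ⁻¹(b))(τ²(a),τ⁻²(b))⋯(τ⁻¹(a),τ(b))`; in particular the two cycles of `τ`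
have equal length. -/
theorem stmt12 {α : Type*} [Finite α] (τ π : Equiv.Perm α)
    (hτ2 : ∃ c₁ c₂ : α, ¬ τ.SameCycle c₁ c₂ ∧ ∀ x : α, τ.SameCycle x c₁ ∨ τ.SameCycle x c₂)
    (hnc : IsNoncrossingOn π τ)
    (hbridge : ∃ a b : α, π.SameCycle a b ∧ ¬ τ.SameCycle a b)
    (hnofix : ∀ x : α, π x ≠ x)
    (hsep : ∀ a : α, ¬ π.SameCycle a (τ a)) :
    ∃ a b : α, ¬ τ.SameCycle a b ∧
      (∀ k : ℤ, π ((τ ^ k) a) = (τ ^ (-k)) b) ∧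
      (∀ k : ℤ, π ((τ ^ k) b) = (τ ^ (-k)) a) ∧
      Nat.card {x : α | τ.SameCycle a x} = Nat.card {x : α | τ.SameCycle b x} := by
  obtain ⟨c₁, c₂, hc, hτ⟩ := hτ2
  obtain ⟨a, b, hπab, hτab⟩ := hbridge
  have hKr : ∀ x, (π⁻¹ * τ) x ≠ x := fun x hx =>
    hsep x ⟨1, by rw [zpow_one]; exact (Equiv.Perm.inv_eq_iff_eq.mp hx).symm⟩
  have hsum := hnc.numOrbits_add_numOrbits_eq_card (numOrbits_eq_two hc hτ)
    (numJoin_eq_one hτ hπab hτab)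
  have hπ₁ := two_mul_numOrbits_le_card hnofix
  have hKr₁ := two_mul_numOrbits_le_card hKr
  have hπ := mul_self_eq_one_of_two_mul_numOrbits_eq_card hnofix (by omega)
  have hconj := mul_mul_inv_eq_inv_of_mul_self_eq_one hπ
    (mul_self_eq_one_of_two_mul_numOrbits_eq_card hKr (by omega))
  obtain rfl : b = π a := (hπab.eq_or_eq_apply_of_mul_self_eq_one hπ).resolve_left
    fun h => hτab (h ▸ .refl τ a)
  refine ⟨a, π a, hτab, fun k => Equiv.Perm.apply_zpow_apply_of_conj_eq_inv hconj k a,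
    fun k => ?_, Nat.card_congr (π.subtypeEquiv fun x =>
      (Equiv.Perm.sameCycle_apply_apply_iff_of_conj_eq_inv hconj).symm)⟩
  rw [Equiv.Perm.apply_zpow_apply_of_conj_eq_inv hconj, ← Equiv.Perm.mul_apply π π, hπ,
    Equiv.Perm.one_apply]
end
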